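/- arXiv:cs/0201006 — 2 statements merged into one kernel-verified Lean document; each statement's English description precedes it below -/
import Mathlib

section
/- In the selectWinner elimination game: if in each round every surviving process independently flips a fair bit and the adversary eliminates all processes holding the minority bit value (keeping the majority, breaking ties adversarially but eliminating at least the minority when both values occur), then whenever k ≥ 2 processes survive, the probability that at least ⌈k/4⌉ processes are eliminated in the round is at least 1/4. -/
/-!
Write `S = #heads - #tails = ∑ᵢ ±1`. The cross terms of `S²` cancel in the sum over all `2^k`
outcomes, so the second moment of `S` is `k`. A round fails exactly when `4 · min < k`, which
forces `|S| ≥ (k + 1) / 2`; by Chebyshev at most a fraction `4k / (k + 1)² ≤ 3/4` of the outcomes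
fail once `k ≥ 3`. For `k = 2` the two split outcomes out of four succeed.
-/

open Finset

def boolSign (b : Bool) : ℤ := if b then 1 else -1

lemma boolSign_mul_self (b : Bool) : boolSign b * boolSign b = 1 := by
  cases b <;> rfl

lemma sq_add_one_le_four_mul_sq_sub {z o : ℕ} (h : 4 * min z o < z + o) :
    ((z + o : ℤ) + 1) ^ 2 ≤ 4 * ((o : ℤ) - z) ^ 2 := by
  have hgap : (z + o : ℤ) + 1 ≤ 2 * |(o : ℤ) - z| := by
    rcases le_total z o with hzo | hoz
    · rw [min_eq_left hzo] at h
      rw [abs_of_nonneg (by omega)]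
      omega
    · rw [min_eq_right hoz] at h
      rw [abs_of_nonpos (by omega)]
      omega
  calc ((z + o : ℤ) + 1) ^ 2 ≤ (2 * |(o : ℤ) - z|) ^ 2 := pow_le_pow_left₀ (by positivity) hgap 2
    _ = 4 * ((o : ℤ) - z) ^ 2 := by rw [mul_pow, sq_abs]; norm_num

section SignSums

variable {ι : Type*} [Fintype ι]

lemma card_filter_true_sub_card_filter_false (f : ι → Bool) :
    (#{i | f i = true} : ℤ) - #{i | f i = false} = ∑ i, boolSign (f i) := by
  simp only [card_filter, Nat.cast_sum, ← sum_sub_distrib]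
  refine sum_congr rfl fun i _ => ?_
  cases f i <;> rfl

lemma card_filter_false_add_card_filter_true (f : ι → Bool) :
    #{i | f i = false} + #{i | f i = true} = Fintype.card ι := by
  simpa using card_filter_add_card_filter_not (s := univ) (fun i => f i = false)

variable [DecidableEq ι]

/-- Flipping the `i`-th bit negates the summand and is an involution without fixed points. -/
lemma sum_boolSign_mul_boolSign_of_ne {i j : ι} (hij : i ≠ j) :
    ∑ f : ι → Bool, boolSign (f i) * boolSign (f j) = 0 := by
  refine sum_involution (fun f _ => Function.update f i (!f i)) (fun f _ => ?_)
    (fun f _ _ h => ?_) (fun f _ => mem_univ _) (fun f _ => ?_)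
  · rw [Function.update_self, Function.update_of_ne hij.symm]
    cases f i <;> cases f j <;> rfl
  · simpa using congrFun h i
  · simp [Function.update_idem]

lemma sum_sq_sum_boolSign :
    ∑ f : ι → Bool, (∑ i, boolSign (f i)) ^ 2 = Fintype.card ι * 2 ^ Fintype.card ι := by
  have hcorr (i j : ι) : ∑ f : ι → Bool, boolSign (f i) * boolSign (f j) =
      if i = j then 2 ^ Fintype.card ι else 0 := by
    split_ifs with hij
    · simp [hij, boolSign_mul_self]
    · exact sum_boolSign_mul_boolSign_of_ne hij
  simp_rw [sq, sum_mul_sum]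
  rw [sum_comm]
  simp_rw [sum_comm (s := univ (α := ι → Bool)), hcorr]
  simp

lemma card_unbalanced_mul_le :
    #{f : ι → Bool | 4 * min #{i | f i = false} #{i | f i = true} < Fintype.card ι} *
      (Fintype.card ι + 1) ^ 2 ≤ 4 * (Fintype.card ι * 2 ^ Fintype.card ι) := by
  set U : Finset (ι → Bool) :=
    {f | 4 * min #{i | f i = false} #{i | f i = true} < Fintype.card ι}
  have hU (f : ι → Bool) (hf : f ∈ U) :
      ((Fintype.card ι : ℤ) + 1) ^ 2 ≤ 4 * (∑ i, boolSign (f i)) ^ 2 := by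
    have hzo := card_filter_false_add_card_filter_true f
    rw [← card_filter_true_sub_card_filter_false, ← hzo]
    push_cast
    exact sq_add_one_le_four_mul_sq_sub (hzo ▸ (mem_filter.1 hf).2)
  have hsum : (#U : ℤ) * ((Fintype.card ι : ℤ) + 1) ^ 2 ≤
      4 * (Fintype.card ι * 2 ^ Fintype.card ι) := calc
    (#U : ℤ) * ((Fintype.card ι : ℤ) + 1) ^ 2 = ∑ _f ∈ U, ((Fintype.card ι : ℤ) + 1) ^ 2 := by
      rw [sum_const, nsmul_eq_mul]
    _ ≤ ∑ f ∈ U, 4 * (∑ i, boolSign (f i)) ^ 2 := sum_le_sum hU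
    _ ≤ ∑ f : ι → Bool, 4 * (∑ i, boolSign (f i)) ^ 2 :=
      sum_le_univ_sum_of_nonneg fun _ => by positivity
    _ = 4 * (Fintype.card ι * 2 ^ Fintype.card ι) := by rw [← mul_sum, sum_sq_sum_boolSign]
  exact_mod_cast hsum

lemma four_mul_card_unbalanced_le (hι : 3 ≤ Fintype.card ι) :
    4 * #{f : ι → Bool | 4 * min #{i | f i = false} #{i | f i = true} < Fintype.card ι} ≤
      3 * 2 ^ Fintype.card ι := by
  set n := Fintype.card ι
  set B := #{f : ι → Bool | 4 * min #{i | f i = false} #{i | f i = true} < n}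
  have hn : 16 * n ≤ 3 * (n + 1) ^ 2 := by nlinarith
  refine Nat.le_of_mul_le_mul_right ?_ (by positivity : 0 < (n + 1) ^ 2)
  calc 4 * B * (n + 1) ^ 2 = 4 * (B * (n + 1) ^ 2) := by ring
    _ ≤ 4 * (4 * (n * 2 ^ n)) := Nat.mul_le_mul_left 4 card_unbalanced_mul_le
    _ = 16 * n * 2 ^ n := by ring
    _ ≤ 3 * (n + 1) ^ 2 * 2 ^ n := Nat.mul_le_mul_right _ hn
    _ = 3 * 2 ^ n * (n + 1) ^ 2 := by ring

end SignSums

lemma two_pow_le_four_mul_card_balanced {k : ℕ} (hk : 2 ≤ k) :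
    2 ^ k ≤ 4 * #{f : Fin k → Bool | k ≤ 4 * min #{i | f i = false} #{i | f i = true}} := by
  obtain rfl | hk := hk.eq_or_lt
  · decide
  have hbad := four_mul_card_unbalanced_le (ι := Fin k) (by simpa using hk.nat_succ_le)
  have hsplit := card_filter_add_card_filter_not (s := univ) fun f : Fin k → Bool =>
    k ≤ 4 * min #{i | f i = false} #{i | f i = true}
  simp only [Fintype.card_fin, not_le, card_univ, Fintype.card_pi, Fintype.card_bool,
    prod_const] at hbad hsplit
  omega

/-- In the selectWinner elimination game with `k ≥ 2` surviving processes, each flipping an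
independent fair bit, the probability that the minority bit value is held by at least `k/4`
of the processes (so at least `⌈k/4⌉` processes get eliminated) is at least `1/4`.
The probability is the counting fraction over the `2^k` equally likely outcomes. -/
theorem selectWinner_successful_round_prob (k : ℕ) (hk : 2 ≤ k) :
    (1 / 4 : ℝ) ≤
      ((Finset.univ.filter fun f : Fin k → Bool =>
          k ≤ 4 * min (Finset.univ.filter fun i => f i = false).card
                      (Finset.univ.filter fun i => f i = true).card).card : ℝ) / 2 ^ k := by
  have h : ((2 ^ k : ℕ) : ℝ) ≤ ((4 * _ : ℕ) : ℝ) :=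
    Nat.cast_le.2 (two_pow_le_four_mul_card_balanced hk)
  push_cast at h
  rw [le_div_iff₀ (by positivity)]
  linarith
end

section
/- Naming is impossible for two identical deterministic processes with asymmetric memory initialized fairly under the alternating schedule: if two identical deterministic automata P and Q operate on registers accessed via private permutations π_P, π_Q, all registers are initialized to the same value, and execution alternates P, Q, P, Q, …, then at the start of every round the local configuration (local view, internal state) of P equals that of Q; hence any values they output are equal. Model this as: given a deterministic transition function step applied to (local view, state), if L_P(V_0) = L_Q(V_0) and s^P_0 = s^Q_0, then by induction L_P(V_t) = L_Q(V_t) and s^P_t = s^Q_t for all t. -/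
/-- Naming impossibility for two identical deterministic processes with asymmetric memory
initialized fairly, under the alternating schedule P, Q, P, Q, …

Registers (type `A`) hold values in `Val`; each process accesses them through an injective
private permutation (`πP`, `πQ`) of local indices `J`. The set `Jw` of private (writable)
local indices has disjoint images under the two permutations, while the shared indices `Jwᶜ`
have equal image sets. Both processes run the same deterministic step function
`step : (local view, state) → (local view, state)`, which only modifies private registers;
writes go through the process's permutation (`V'` is the absolute view after P's move in a
round, `V (t+1)` the view after Q's subsequent move). If the memory is initialized fairly
(`V 0` constant) and the initial states coincide, then at the start of every round the local
configurations of P and Q coincide; in particular any identifier decided as a function of the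
configuration is the same for both. -/
theorem deterministic_asymmetric_naming_impossible
    {S J A Val : Type*} (Jw : Set J) (πP πQ : J → A)
    (hPinj : Function.Injective πP) (hQinj : Function.Injective πQ)
    (hdisj : Disjoint (πP '' Jw) (πQ '' Jw))
    (hshared : πP '' Jwᶜ = πQ '' Jwᶜ)
    (step : (J → Val) × S → (J → Val) × S)
    (honly : ∀ (L : J → Val) (s : S) (j : J), j ∉ Jw → (step (L, s)).1 j = L j)
    (V V' : ℕ → A → Val) (sP sQ : ℕ → S)
    (hV0 : ∃ v : Val, ∀ a : A, V 0 a = v) (hs0 : sP 0 = sQ 0)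
    (hPw : ∀ t j, V' t (πP j) = (step (fun j' => V t (πP j'), sP t)).1 j)
    (hPo : ∀ t a, a ∉ Set.range πP → V' t a = V t a)
    (hPs : ∀ t, sP (t + 1) = (step (fun j' => V t (πP j'), sP t)).2)
    (hQw : ∀ t j, V (t + 1) (πQ j) = (step (fun j' => V' t (πQ j'), sQ t)).1 j)
    (hQo : ∀ t a, a ∉ Set.range πQ → V (t + 1) a = V' t a)
    (hQs : ∀ t, sQ (t + 1) = (step (fun j' => V' t (πQ j'), sQ t)).2) :
    ∀ t : ℕ, ((fun j => V t (πP j)) = fun j => V t (πQ j)) ∧ sP t = sQ t ∧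
      ∀ decide : (J → Val) × S → ℕ,
        decide (fun j => V t (πP j), sP t) = decide (fun j => V t (πQ j), sQ t) := by

  intro t
  induction t with
  | zero =>
    obtain ⟨v, hv⟩ := hV0
    have hL : (fun j => V 0 (πP j)) = fun j => V 0 (πQ j) := by
      funext j; rw [hv, hv]
    exact ⟨hL, hs0, fun decide => by rw [hL, hs0]⟩
  | succ t ih =>
    obtain ⟨hL, hs, -⟩ := ih
    -- P's private registers are not in Q's range, and vice versa
    have hPout : ∀ j, j ∈ Jw → πP j ∉ Set.range πQ := by
      intro j hj ⟨k, hk⟩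
      by_cases hkw : k ∈ Jw
      · exact Set.disjoint_left.mp hdisj ⟨j, hj, rfl⟩ (hk ▸ ⟨k, hkw, rfl⟩)
      · have : πP j ∈ πP '' Jwᶜ := hshared ▸ (hk ▸ ⟨k, hkw, rfl⟩)
        obtain ⟨m, hm, hme⟩ := this
        exact hm (hPinj hme ▸ hj)
    have hQout : ∀ j, j ∈ Jw → πQ j ∉ Set.range πP := by
      intro j hj ⟨k, hk⟩
      by_cases hkw : k ∈ Jw
      · exact Set.disjoint_left.mp hdisj (hk ▸ ⟨k, hkw, rfl⟩) ⟨j, hj, rfl⟩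
      · have : πQ j ∈ πQ '' Jwᶜ := hshared ▸ (hk ▸ ⟨k, hkw, rfl⟩)
        obtain ⟨m, hm, hme⟩ := this
        exact hm (hQinj hme ▸ hj)
    -- P's move does not change Q's local view
    have hA : ∀ j, V' t (πQ j) = V t (πQ j) := by
      intro j
      by_cases hj : j ∈ Jw
      · exact hPo t _ (hQout j hj)
      · have : πQ j ∈ πP '' Jwᶜ := hshared ▸ ⟨j, hj, rfl⟩
        obtain ⟨m, hm, hme⟩ := this
        calc V' t (πQ j) = V' t (πP m) := by rw [hme]
          _ = (step (fun j' => V t (πP j'), sP t)).1 m := hPw t m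
          _ = V t (πP m) := honly _ _ m hm
          _ = V t (πQ j) := by rw [hme]
    have hB : (fun j' => V' t (πQ j')) = fun j' => V t (πP j') := by
      funext j; rw [hA j]; exact congrFun hL.symm j
    have hsB : sP (t + 1) = sQ (t + 1) := by
      rw [hPs, hQs, hB, hs]
    have hQnew : ∀ j, V (t + 1) (πQ j) = (step (fun j' => V t (πP j'), sP t)).1 j := by
      intro j; rw [hQw, hB, hs]
    have hLnew : (fun j => V (t + 1) (πP j)) = fun j => V (t + 1) (πQ j) := by
      funext j
      rw [hQnew j]
      by_cases hj : j ∈ Jw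
      · rw [hQo t _ (hPout j hj), hPw]
      · have : πP j ∈ πQ '' Jwᶜ := hshared ▸ ⟨j, hj, rfl⟩
        obtain ⟨k, hk, hke⟩ := this
        calc V (t + 1) (πP j) = V (t + 1) (πQ k) := by rw [hke]
          _ = (step (fun j' => V t (πP j'), sP t)).1 k := hQnew k
          _ = V t (πP k) := honly _ _ k hk
          _ = V t (πQ k) := congrFun hL k
          _ = V t (πP j) := by rw [hke]
          _ = (step (fun j' => V t (πP j'), sP t)).1 j := (honly (fun j' => V t (πP j')) (sP t) j hj).symm
    exact ⟨hLnew, hsB, fun decide => by rw [hLnew, hsB]⟩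
end
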